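/- arXiv:math/0502271 — 3 statements merged into one kernel-verified Lean document; each statement's English description precedes it below -/
import Mathlib

section
/- Let φ: W → W' be an isomorphism of Coxeter groups with even Coxeter systems (W,S) and (W',S'), and π': W' → (W')^{ab} the abelianization. Write A τ A' for A ⊆ S, A' ⊆ S' if π'(φ(W_A)) = π'(W'_{A'}). Then: (i) A τ A' and B τ A' imply A = B; (ii) A τ A' and A τ B' imply A' = B'; (iii) A τ A' and B τ B' imply (A ∩ B) τ (A' ∩ B'). -/
open Subgroup

/-- `S` is a Coxeter generating set for the group `W`: there is a Coxeter matrix on `S` and a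
Coxeter system on `W` whose simple reflections are exactly the elements of `S`. -/
def IsCoxGenSet {W : Type*} [Group W] (S : Set W) : Prop :=
  S.Finite ∧ ∃ (M : CoxeterMatrix S) (cs : CoxeterSystem M W), ∀ s : S, cs.simple s = (s : W)

/-- `T` is a spherical subset of the generating set `S`: the parabolic subgroup `W_T` is finite. -/
def IsSpherical {W : Type*} [Group W] (S T : Set W) : Prop :=
  T ⊆ S ∧ ((Subgroup.closure T : Subgroup W) : Set W).Finite

/-- `T` is a maximal spherical subset of `S`. -/
def IsMaxSpherical {W : Type*} [Group W] (S T : Set W) : Prop :=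
  IsSpherical S T ∧ ∀ U : Set W, IsSpherical S U → T ⊆ U → U = T

/-- `T` is independent: all pairwise orders `m(s,t)` equal `2`. -/
def IsIndep {W : Type*} [Group W] (T : Set W) : Prop :=
  ∀ s ∈ T, ∀ t ∈ T, s ≠ t → orderOf (s * t) = 2

/-- `T` is a maximal independent subset of `Sb`. -/
def IsMaxIndep {W : Type*} [Group W] (Sb T : Set W) : Prop :=
  IsIndep T ∧ T ⊆ Sb ∧ ∀ U : Set W, IsIndep U → U ⊆ Sb → T ⊆ U → U = T

/-- all pairwise orders lie in `{2} ∪ 4ℕ` (with `orderOf = 0` meaning `∞`). -/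
def IsStrongEvenSet {W : Type*} [Group W] (T : Set W) : Prop :=
  ∀ s ∈ T, ∀ t ∈ T, s ≠ t → (orderOf (s * t) = 2 ∨ 4 ∣ orderOf (s * t))

/-- all pairwise orders are even (with `orderOf = 0` meaning `∞`). -/
def IsEvenSet {W : Type*} [Group W] (T : Set W) : Prop :=
  ∀ s ∈ T, ∀ t ∈ T, s ≠ t → Even (orderOf (s * t))

/-- `S̄`: the union of all maximal spherical subsets `T` of `S` with `(W_T, T)` strong even. -/
def Sbar {W : Type*} [Group W] (S : Set W) : Set W :=
  ⋃₀ {T | IsMaxSpherical S T ∧ IsStrongEvenSet T}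

/-- Condition (0): even orders lie in `{2} ∪ 4ℕ`. -/
def Cond0 {W : Type*} [Group W] (S : Set W) : Prop :=
  ∀ s ∈ S, ∀ t ∈ S, s ≠ t → Even (orderOf (s * t)) →
    (orderOf (s * t) = 2 ∨ 4 ∣ orderOf (s * t))

/-- Condition (1): odd-order pairs are maximal spherical subsets. -/
def Cond1 {W : Type*} [Group W] (S : Set W) : Prop :=
  ∀ s ∈ S, ∀ t ∈ S, s ≠ t → Odd (orderOf (s * t)) → IsMaxSpherical S {s, t}

/-- Condition (2): no three-element subset `{s,t,u}` with `m(s,t)`, `m(t,u)` both odd. -/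
def Cond2 {W : Type*} [Group W] (S : Set W) : Prop :=
  ¬ ∃ s ∈ S, ∃ t ∈ S, ∃ u ∈ S, s ≠ t ∧ t ≠ u ∧ s ≠ u ∧
    Odd (orderOf (s * t)) ∧ Odd (orderOf (t * u))

/-- Condition (3): each odd pair meets at most two maximal spherical subsets. -/
def Cond3 {W : Type*} [Group W] (S : Set W) : Prop :=
  ∀ s ∈ S, ∀ t ∈ S, s ≠ t → Odd (orderOf (s * t)) →
    ∀ T₁ T₂ T₃ : Set W,
      (IsMaxSpherical S T₁ ∧ (T₁ ∩ {s, t}).Nonempty) →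
      (IsMaxSpherical S T₂ ∧ (T₂ ∩ {s, t}).Nonempty) →
      (IsMaxSpherical S T₃ ∧ (T₃ ∩ {s, t}).Nonempty) →
      T₁ = T₂ ∨ T₁ = T₃ ∨ T₂ = T₃

/-- Conditions (0)–(3) of the main theorem. -/
def Conds {W : Type*} [Group W] (S : Set W) : Prop :=
  Cond0 S ∧ Cond1 S ∧ Cond2 S ∧ Cond3 S

/-- `A τ A'`: equality of images in the abelianization of `W'`:
`π'(φ(W_A)) = π'(W'_{A'})`. -/
def Tau {W W' : Type*} [Group W] [Group W'] (φ : W →* W') (A : Set W) (A' : Set W') : Prop :=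
  Subgroup.map ((Abelianization.of).comp φ) (Subgroup.closure A) =
  Subgroup.map Abelianization.of (Subgroup.closure A')


section TauAux

open Multiplicative

variable {ι : Type*} [DecidableEq ι]

/-- Generators of the elementary abelian 2-group indexed by a set. -/
def tauGens (I : Set ι) : Set (ι → Multiplicative (ZMod 2)) :=
  (fun i => Pi.mulSingle i (ofAdd (1 : ZMod 2))) '' I

lemma tau_zmod2_cases (a : Multiplicative (ZMod 2)) : a = 1 ∨ a = ofAdd 1 := by
  revert a; decide

lemma tau_zmod2_sq (a : Multiplicative (ZMod 2)) : a * a = 1 := by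
  revert a; decide

lemma tauGens_mono {I J : Set ι} (h : I ⊆ J) : tauGens I ⊆ tauGens J :=
  Set.image_mono h

lemma mem_closure_tauGens_iff [Fintype ι] {I : Set ι} {x : ι → Multiplicative (ZMod 2)} :
    x ∈ Subgroup.closure (tauGens I) ↔ ∀ j ∉ I, x j = 1 := by
  constructor
  · intro hx j hj
    have hle : Subgroup.closure (tauGens I) ≤
        Subgroup.pi {j} fun _ => (⊥ : Subgroup (Multiplicative (ZMod 2))) := by
      rw [Subgroup.closure_le]
      rintro _ ⟨i, hi, rfl⟩ k hk
      rw [Set.mem_singleton_iff] at hk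
      subst hk
      have hki : k ≠ i := fun h => hj (h ▸ hi)
      simp [Subgroup.mem_bot, Pi.mulSingle_eq_of_ne hki]
    have := hle hx
    rw [Subgroup.mem_pi] at this
    simpa using this j rfl
  · intro h
    rw [← Finset.univ_prod_mulSingle x]
    apply Subgroup.prod_mem
    intro i _
    by_cases hi : i ∈ I
    · rcases tau_zmod2_cases (x i) with h1 | h1
      · rw [h1, Pi.mulSingle_one]; exact one_mem _
      · rw [h1]; exact Subgroup.subset_closure ⟨i, hi, rfl⟩
    · rw [h i hi, Pi.mulSingle_one]; exact one_mem _

lemma mulSingle_mem_closure_tauGens_iff [Fintype ι] {I : Set ι} {i : ι} :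
    Pi.mulSingle (M := fun _ => Multiplicative (ZMod 2)) i (ofAdd 1) ∈
      Subgroup.closure (tauGens I) ↔ i ∈ I := by
  constructor
  · intro h
    by_contra hi
    have h1 := mem_closure_tauGens_iff.mp h i hi
    rw [Pi.mulSingle_eq_same] at h1
    exact absurd h1 (by decide)
  · exact fun hi => Subgroup.subset_closure ⟨i, hi, rfl⟩

lemma closure_tauGens_inj [Fintype ι] {I J : Set ι}
    (h : Subgroup.closure (tauGens I) = Subgroup.closure (tauGens J)) : I = J := by
  ext i
  rw [← mulSingle_mem_closure_tauGens_iff (I := I), ← mulSingle_mem_closure_tauGens_iff (I := J), h]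

lemma closure_tauGens_inter [Fintype ι] (I J : Set ι) :
    Subgroup.closure (tauGens I) ⊓ Subgroup.closure (tauGens J) =
      Subgroup.closure (tauGens (I ∩ J)) := by
  apply le_antisymm
  · intro x hx
    rw [Subgroup.mem_inf, mem_closure_tauGens_iff, mem_closure_tauGens_iff] at hx
    rw [mem_closure_tauGens_iff]
    intro j hj
    by_cases hI : j ∈ I
    · exact hx.2 j fun hJ => hj ⟨hI, hJ⟩
    · exact hx.1 j hI
  · exact le_inf (Subgroup.closure_mono (tauGens_mono Set.inter_subset_left))
      (Subgroup.closure_mono (tauGens_mono Set.inter_subset_right))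

/-- For an even Coxeter generating set, there is a homomorphism to the elementary abelian
2-group sending generators to basis vectors, together with a retraction witnessing that the
induced map from the abelianization is injective. -/
lemma exists_tau_pi_hom {W : Type} [Group W] (S : Set W) [Fintype ↥S] [DecidableEq ↥S]
    (hS : IsCoxGenSet S) (he : IsEvenSet S) :
    ∃ π : W →* (↥S → Multiplicative (ZMod 2)),
      (∀ i : ↥S, π ↑i = Pi.mulSingle i (ofAdd 1)) ∧
      ∃ R : (↥S → Multiplicative (ZMod 2)) →* Abelianization W,
        ∀ w : W, R (π w) = Abelianization.of w := by
  obtain ⟨-, M, cs, hcs⟩ := hS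
  set f : ↥S → (↥S → Multiplicative (ZMod 2)) :=
    fun i => Pi.mulSingle i (ofAdd (1 : ZMod 2)) with hf
  have hsq : ∀ g : ↥S → Multiplicative (ZMod 2), g * g = 1 := by
    intro g; funext j; exact tau_zmod2_sq (g j)
  have hlift : M.IsLiftable f := by
    intro i i'
    by_cases hii : i = i'
    · subst hii
      rw [M.diagonal i, pow_one]
      exact hsq _
    · have hne : (i : W) ≠ (i' : W) := fun h => hii (Subtype.ext h)
      have hpow : ((i : W) * (i' : W)) ^ M i i' = 1 := by
        have h := cs.simple_mul_simple_pow i i'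
        rwa [hcs, hcs] at h
      have hdvd : orderOf ((i : W) * (i' : W)) ∣ M i i' := orderOf_dvd_of_pow_eq_one hpow
      have heven : Even (orderOf ((i : W) * (i' : W))) := he i i.2 i' i'.2 hne
      obtain ⟨k, hk⟩ := dvd_trans heven.two_dvd hdvd
      rw [hk, pow_mul, pow_two, hsq, one_pow]
  set π : W →* (↥S → Multiplicative (ZMod 2)) := cs.lift ⟨f, hlift⟩ with hπdef
  have hπ : ∀ i : ↥S, π ↑i = Pi.mulSingle i (ofAdd 1) := by
    intro i
    rw [← hcs i, hπdef]
    exact cs.lift_apply_simple hlift i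
  refine ⟨π, hπ, ?_⟩
  have hinv : ∀ i : ↥S, (Abelianization.of ((i : W))) ^ 2 = 1 := by
    intro i
    have h1 : (i : W) * (i : W) = 1 := by
      rw [← hcs i]; exact cs.simple_mul_simple_self i
    rw [pow_two, ← map_mul, h1, map_one]
  set R0 : (↥S → Multiplicative (ZMod 2)) → Abelianization W :=
    fun x => ∏ i : ↥S, (Abelianization.of ((i : W))) ^ (toAdd (x i)).val with hR0
  have hR0mul : ∀ x y, R0 (x * y) = R0 x * R0 y := by
    intro x y
    rw [hR0]
    simp only
    rw [← Finset.prod_mul_distrib]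
    apply Finset.prod_congr rfl
    intro i _
    have h1 : (toAdd ((x * y) i)).val = (toAdd (x i) + toAdd (y i)).val := rfl
    rw [h1, ZMod.val_add, ← pow_eq_pow_mod _ (hinv i), pow_add]
  set R : (↥S → Multiplicative (ZMod 2)) →* Abelianization W := MonoidHom.mk' R0 hR0mul with hRdef
  have hRf : ∀ i : ↥S, R (f i) = Abelianization.of ((i : W)) := by
    intro i
    show R0 (f i) = _
    rw [hR0]
    simp only
    rw [Finset.prod_eq_single i]
    · rw [hf]
      simp only [Pi.mulSingle_eq_same, toAdd_ofAdd, ZMod.val_one, pow_one]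
    · intro j _ hj
      rw [hf]
      simp only
      rw [Pi.mulSingle_eq_of_ne hj]
      simp
    · intro h; exact absurd (Finset.mem_univ i) h
  refine ⟨R, ?_⟩
  intro w
  have htop : w ∈ Subgroup.closure (Set.range cs.simple) := by
    rw [cs.subgroup_closure_range_simple]; exact Subgroup.mem_top w
  refine Subgroup.closure_induction ?_ ?_ ?_ ?_ htop
  · rintro x ⟨i, rfl⟩
    rw [hcs i, hπ i]
    exact hRf i
  · rw [map_one, map_one, map_one]
  · intro a b _ _ ha hb
    rw [map_mul, map_mul, map_mul, ha, hb]
  · intro a _ ha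
    rw [map_inv, map_inv, map_inv, ha]

/-- Image of a parabolic subgroup under `π` is the span of the corresponding basis vectors. -/
lemma map_tau_pi_closure {W : Type} [Group W] {S : Set W} [Fintype ↥S] [DecidableEq ↥S]
    (π : W →* (↥S → Multiplicative (ZMod 2)))
    (hπ : ∀ i : ↥S, π ↑i = Pi.mulSingle i (ofAdd 1))
    {A : Set W} (hA : A ⊆ S) :
    Subgroup.map π (Subgroup.closure A) =
      Subgroup.closure (tauGens (Subtype.val ⁻¹' A : Set ↥S)) := by
  rw [MonoidHom.map_closure]
  congr 1
  ext x
  constructor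
  · rintro ⟨a, ha, rfl⟩
    exact ⟨⟨a, hA ha⟩, ha, (hπ ⟨a, hA ha⟩).symm⟩
  · rintro ⟨i, hi, rfl⟩
    exact ⟨↑i, hi, hπ i⟩

lemma tau_val_image_preimage {W : Type} [Group W] {S : Set W} {A : Set W} (hA : A ⊆ S) :
    Subtype.val '' (Subtype.val ⁻¹' A : Set ↥S) = A := by
  rw [Set.image_preimage_eq_inter_range, Subtype.range_coe]
  exact Set.inter_eq_self_of_subset_left hA

end TauAux

/-- Basic properties of the relation `τ` for an isomorphism of even Coxeter systems. -/
theorem tau_properties {W W' : Type} [Group W] [Group W'] (S : Set W) (S' : Set W')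
    (hS : IsCoxGenSet S) (hS' : IsCoxGenSet S') (he : IsEvenSet S) (he' : IsEvenSet S')
    (φ : W ≃* W') :
    (∀ (A B : Set W) (A' : Set W'), A ⊆ S → B ⊆ S → A' ⊆ S' →
        Tau φ.toMonoidHom A A' → Tau φ.toMonoidHom B A' → A = B) ∧
    (∀ (A : Set W) (A' B' : Set W'), A ⊆ S → A' ⊆ S' → B' ⊆ S' →
        Tau φ.toMonoidHom A A' → Tau φ.toMonoidHom A B' → A' = B') ∧
    (∀ (A B : Set W) (A' B' : Set W'), A ⊆ S → B ⊆ S → A' ⊆ S' → B' ⊆ S' →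
        Tau φ.toMonoidHom A A' → Tau φ.toMonoidHom B B' →
        Tau φ.toMonoidHom (A ∩ B) (A' ∩ B')) := by
  classical
  haveI : Fintype ↥S := hS.1.fintype
  haveI : Fintype ↥S' := hS'.1.fintype
  obtain ⟨π, hπ, R, hR⟩ := exists_tau_pi_hom S hS he
  obtain ⟨π', hπ', R', hR'⟩ := exists_tau_pi_hom S' hS' he'
  set L' : Abelianization W' →* (↥S' → Multiplicative (ZMod 2)) := Abelianization.lift π'
    with hL'def
  set K : Abelianization W' →* (↥S → Multiplicative (ZMod 2)) :=
    Abelianization.lift (π.comp φ.symm.toMonoidHom) with hKdef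
  have hL'comp : L'.comp (Abelianization.of (G := W')) = π' := by
    ext w'
    simp [hL'def]
  have hKcomp : K.comp ((Abelianization.of).comp φ.toMonoidHom) = π := by
    ext w
    simp [hKdef]
  have ha : ∀ A' : Set W', A' ⊆ S' →
      Subgroup.map L' (Subgroup.map Abelianization.of (Subgroup.closure A')) =
        Subgroup.closure (tauGens (Subtype.val ⁻¹' A' : Set ↥S')) := by
    intro A' hA'
    rw [Subgroup.map_map, hL'comp, map_tau_pi_closure π' hπ' hA']
  have hb : ∀ A : Set W, A ⊆ S →
      Subgroup.map K
          (Subgroup.map ((Abelianization.of).comp φ.toMonoidHom) (Subgroup.closure A)) =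
        Subgroup.closure (tauGens (Subtype.val ⁻¹' A : Set ↥S)) := by
    intro A hA
    rw [Subgroup.map_map, hKcomp, map_tau_pi_closure π hπ hA]
  have hL'inj : Function.Injective L' := by
    have hid : R'.comp L' = MonoidHom.id _ := by
      apply Abelianization.hom_ext
      ext w'
      simp only [MonoidHom.comp_apply, MonoidHom.id_apply]
      rw [show L' (Abelianization.of w') = π' w' from DFunLike.congr_fun hL'comp w', hR']
    intro a b hab
    have := congrArg R' hab
    rwa [show ∀ c, R' (L' c) = c from fun c => DFunLike.congr_fun hid c,
      show ∀ c, R' (L' c) = c from fun c => DFunLike.congr_fun hid c] at this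
  have hKinj : Function.Injective K := by
    set J : Abelianization W →* Abelianization W' :=
      Abelianization.lift ((Abelianization.of).comp φ.toMonoidHom) with hJdef
    have hid : J.comp (R.comp K) = MonoidHom.id _ := by
      apply Abelianization.hom_ext
      ext w'
      simp only [MonoidHom.comp_apply, MonoidHom.id_apply]
      have h1 : K (Abelianization.of w') = π (φ.symm w') := by simp [hKdef]
      rw [h1, hR, hJdef]
      simp
    intro a b hab
    have := congrArg (J.comp R) hab
    simp only [MonoidHom.comp_apply] at this
    rwa [show ∀ c, J (R (K c)) = c from fun c => DFunLike.congr_fun hid c,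
      show ∀ c, J (R (K c)) = c from fun c => DFunLike.congr_fun hid c] at this
  refine ⟨?_, ?_, ?_⟩
  · intro A B A' hA hB hA' h1 h2
    have h1' : Subgroup.map ((Abelianization.of).comp φ.toMonoidHom) (Subgroup.closure A) =
        Subgroup.map Abelianization.of (Subgroup.closure A') := h1
    have h2' : Subgroup.map ((Abelianization.of).comp φ.toMonoidHom) (Subgroup.closure B) =
        Subgroup.map Abelianization.of (Subgroup.closure A') := h2
    have h4 := congrArg (Subgroup.map K) (h1'.trans h2'.symm)
    rw [hb A hA, hb B hB] at h4
    have h5 := closure_tauGens_inj h4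
    calc A = Subtype.val '' (Subtype.val ⁻¹' A : Set ↥S) := (tau_val_image_preimage hA).symm
      _ = Subtype.val '' (Subtype.val ⁻¹' B : Set ↥S) := by rw [h5]
      _ = B := tau_val_image_preimage hB
  · intro A A' B' hA hA' hB' h1 h2
    have h1' : Subgroup.map ((Abelianization.of).comp φ.toMonoidHom) (Subgroup.closure A) =
        Subgroup.map Abelianization.of (Subgroup.closure A') := h1
    have h2' : Subgroup.map ((Abelianization.of).comp φ.toMonoidHom) (Subgroup.closure A) =
        Subgroup.map Abelianization.of (Subgroup.closure B') := h2
    have h4 := congrArg (Subgroup.map L') (h1'.symm.trans h2')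
    rw [ha A' hA', ha B' hB'] at h4
    have h5 := closure_tauGens_inj h4
    calc A' = Subtype.val '' (Subtype.val ⁻¹' A' : Set ↥S') := (tau_val_image_preimage hA').symm
      _ = Subtype.val '' (Subtype.val ⁻¹' B' : Set ↥S') := by rw [h5]
      _ = B' := tau_val_image_preimage hB'
  · intro A B A' B' hA hB hA' hB' h1 h2
    have h1' : Subgroup.map ((Abelianization.of).comp φ.toMonoidHom) (Subgroup.closure A) =
        Subgroup.map Abelianization.of (Subgroup.closure A') := h1
    have h2' : Subgroup.map ((Abelianization.of).comp φ.toMonoidHom) (Subgroup.closure B) =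
        Subgroup.map Abelianization.of (Subgroup.closure B') := h2
    have hAB : A ∩ B ⊆ S := fun x hx => hA hx.1
    have hAB' : A' ∩ B' ⊆ S' := fun x hx => hA' hx.1
    have step1 : Subgroup.map ((Abelianization.of).comp φ.toMonoidHom)
          (Subgroup.closure (A ∩ B)) =
        Subgroup.map ((Abelianization.of).comp φ.toMonoidHom) (Subgroup.closure A) ⊓
          Subgroup.map ((Abelianization.of).comp φ.toMonoidHom) (Subgroup.closure B) := by
      apply Subgroup.map_injective hKinj
      rw [Subgroup.map_inf _ _ _ hKinj, hb _ hAB, hb _ hA, hb _ hB,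
        closure_tauGens_inter, Set.preimage_inter]
    have step2 : Subgroup.map Abelianization.of (Subgroup.closure (A' ∩ B')) =
        Subgroup.map Abelianization.of (Subgroup.closure A') ⊓
          Subgroup.map Abelianization.of (Subgroup.closure B') := by
      apply Subgroup.map_injective hL'inj
      rw [Subgroup.map_inf _ _ _ hL'inj, ha _ hAB', ha _ hA', ha _ hB',
        closure_tauGens_inter, Set.preimage_inter]
    show Subgroup.map ((Abelianization.of).comp φ.toMonoidHom) (Subgroup.closure (A ∩ B)) =
      Subgroup.map Abelianization.of (Subgroup.closure (A' ∩ B'))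
    rw [step1, step2, h1', h2']
end

section
/- Let (W,S) be a Coxeter system satisfying conditions (0)–(3) of the main theorem and let S̄ be the union of the strong even maximal spherical subsets of S. Then for each s ∈ S \ S̄ there exists a unique t ∈ S \ {s} with m(s,t) odd, and moreover m(s,u) = ∞ for every u ∈ S \ {s,t}. -/
open Subgroup

section Aux
variable {W : Type*} [Group W]

variable {W : Type*} [Group W]

private lemma orderOf_mul_comm' (a b : W) : orderOf (a * b) = orderOf (b * a) :=
  (SemiconjBy.orderOf_eq a (by simp [SemiconjBy, mul_assoc])).symm

private lemma closure_pair_finite {s u : W} (hs : s * s = 1) (hu : u * u = 1)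
    (hm : orderOf (s * u) ≠ 0) :
    ((Subgroup.closure {s, u} : Subgroup W) : Set W).Finite := by
  set r := s * u with hr
  set m := orderOf r with hmo
  have hm1 : 0 < m := Nat.pos_of_ne_zero hm
  have hsinv : s⁻¹ = s := by rw [inv_eq_iff_mul_eq_one, hs]
  have huinv : u⁻¹ = u := by rw [inv_eq_iff_mul_eq_one, hu]
  have hrinv : r⁻¹ = r ^ (m - 1) := by
    have h2 : r ^ (m - 1) * r = 1 := by
      rw [← pow_succ, Nat.sub_add_cancel hm1, pow_orderOf_eq_one]
    exact (eq_inv_of_mul_eq_one_left h2).symm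
  have hconj : s * r * s⁻¹ = r ^ (m - 1) := by
    rw [← hrinv, hsinv, hr, mul_inv_rev, hsinv, huinv, ← mul_assoc, hs, one_mul]
  have hkey : ∀ b : ℕ, s * r ^ b = r ^ ((m - 1) * b) * s := by
    intro b
    have h1 : s * r ^ b * s⁻¹ = r ^ ((m - 1) * b) := by
      rw [← conj_pow, hconj, ← pow_mul]
    calc s * r ^ b = s * r ^ b * s⁻¹ * s := by rw [inv_mul_cancel_right]
    _ = r ^ ((m - 1) * b) * s := by rw [h1]
  have hP : ∀ x ∈ Subgroup.closure ({s, u} : Set W), ∃ k : ℕ, x = r ^ k ∨ x = r ^ k * s := by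
    intro x hx
    refine Subgroup.closure_induction (fun x hx => ?_) ⟨0, Or.inl (by simp)⟩
      (fun x y _ _ hx hy => ?_) (fun x _ hx => ?_) hx
    · rcases hx with hx | hx
      · exact ⟨0, Or.inr (by simp [hx])⟩
      · refine ⟨m - 1, Or.inr ?_⟩
        rw [← hrinv, hr, mul_inv_rev, hsinv, huinv, mul_assoc, hs, mul_one, hx]
    · obtain ⟨a, ha | ha⟩ := hx <;> obtain ⟨b, hb | hb⟩ := hy <;> subst ha hb
      · exact ⟨a + b, Or.inl (pow_add r a b).symm⟩
      · exact ⟨a + b, Or.inr (by rw [← mul_assoc, ← pow_add])⟩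
      · exact ⟨a + (m - 1) * b, Or.inr (by rw [mul_assoc, hkey b, ← mul_assoc, ← pow_add])⟩
      · refine ⟨a + (m - 1) * b, Or.inl ?_⟩
        rw [mul_assoc, ← mul_assoc s, hkey b, mul_assoc, hs, mul_one, ← pow_add]
    · obtain ⟨a, ha | ha⟩ := hx <;> subst ha
      · exact ⟨(m - 1) * a, Or.inl (by rw [pow_mul, ← hrinv, inv_pow])⟩
      · refine ⟨(m - 1) * ((m - 1) * a), Or.inr ?_⟩
        rw [mul_inv_rev, hsinv, ← inv_pow, hrinv, ← pow_mul, hkey]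
  have hsub : (Subgroup.closure ({s, u} : Set W) : Set W) ⊆
      ((fun k : ℕ => r ^ k) '' Set.Iio m) ∪ ((fun k : ℕ => r ^ k * s) '' Set.Iio m) := by
    intro x hx
    obtain ⟨k, hk | hk⟩ := hP x hx
    · exact Or.inl ⟨k % m, Nat.mod_lt _ hm1, by rw [hmo]; show r ^ (k % orderOf r) = x; rw [pow_mod_orderOf, hk]⟩
    · exact Or.inr ⟨k % m, Nat.mod_lt _ hm1, by rw [hmo]; show r ^ (k % orderOf r) * s = x; rw [pow_mod_orderOf, hk]⟩
  exact (((Set.finite_Iio m).image _).union ((Set.finite_Iio m).image _)).subset hsub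


private lemma IsSpherical.orderOf_ne_zero' {S T : Set W} (h : IsSpherical S T)
    {a b : W} (ha : a ∈ T) (hb : b ∈ T) : orderOf (a * b) ≠ 0 := by
  have hmem : a * b ∈ Subgroup.closure T :=
    mul_mem (Subgroup.subset_closure ha) (Subgroup.subset_closure hb)
  haveI : Finite (Subgroup.closure T : Subgroup W) := h.2.to_subtype
  rw [← Subgroup.orderOf_mk (a * b) hmem]
  exact (orderOf_pos _).ne'

private lemma exists_maxSpherical {S T : Set W} (hfin : S.Finite) (hT : IsSpherical S T) :
    ∃ T', IsMaxSpherical S T' ∧ T ⊆ T' := by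
  obtain ⟨U, hU, hmax⟩ := Set.Finite.exists_maximalFor id {U : Set W | IsSpherical S U ∧ T ⊆ U}
    (hfin.finite_subsets.subset fun U hU => hU.1.1) ⟨T, hT, subset_rfl⟩
  exact ⟨U, ⟨hU.1, fun V hV hUV => Set.Subset.antisymm (hmax ⟨hV, hU.2.trans hUV⟩ hUV) hUV⟩, hU.2⟩

private lemma maxSpherical_odd_pair {S T : Set W} (h0 : Cond0 S) (h1 : Cond1 S)
    (hT : IsMaxSpherical S T) (hne : ¬ IsStrongEvenSet T) :
    ∃ a ∈ T, ∃ b ∈ T, a ≠ b ∧ Odd (orderOf (a * b)) ∧ T = {a, b} := by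
  unfold IsStrongEvenSet at hne
  push_neg at hne
  obtain ⟨a, ha, b, hb, hab, hno⟩ := hne
  have haS := hT.1.1 ha
  have hbS := hT.1.1 hb
  have hodd : Odd (orderOf (a * b)) := by
    rcases Nat.even_or_odd (orderOf (a * b)) with he | ho
    · exact absurd (h0 a haS b hbS hab he) (not_or.mpr hno)
    · exact ho
  have hmax := h1 a haS b hbS hab hodd
  have hTe : T = {a, b} :=
    hmax.2 T hT.1 (Set.insert_subset_iff.mpr ⟨ha, Set.singleton_subset_iff.2 hb⟩)
  exact ⟨a, ha, b, hb, hab, hodd, hTe⟩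

end Aux

/-- Each `s ∈ S \ S̄` has a unique odd partner `t`, and `m(s,u) = ∞` for all other `u`. -/
theorem odd_partner {W : Type} [Group W] (S : Set W) (hS : IsCoxGenSet S) (hc : Conds S)
    (s : W) (hs : s ∈ S \ Sbar S) :
    ∃ t ∈ S, t ≠ s ∧ Odd (orderOf (s * t)) ∧
      (∀ t' ∈ S, t' ≠ s → Odd (orderOf (s * t')) → t' = t) ∧
      (∀ u ∈ S, u ∉ ({s, t} : Set W) → orderOf (s * u) = 0) := by
  obtain ⟨hfin, M, cs, hsimp⟩ := hS
  have hsq : ∀ x ∈ S, x * x = 1 := by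
    intro x hx
    have h := cs.simple_mul_simple_self ⟨x, hx⟩
    rwa [hsimp ⟨x, hx⟩] at h
  obtain ⟨hsS, hsbar⟩ := hs
  obtain ⟨h0, h1, h2, h3⟩ := hc
  have hnotin : ∀ T : Set W, IsMaxSpherical S T → s ∈ T → ¬ IsStrongEvenSet T := by
    intro T hT hsT hSE
    exact hsbar (Set.mem_sUnion.mpr ⟨T, ⟨hT, hSE⟩, hsT⟩)
  have hss0 : orderOf (s * s) ≠ 0 := by
    rw [hsq s hsS, orderOf_one]; exact one_ne_zero
  have hssph : IsSpherical S {s} := by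
    refine ⟨Set.singleton_subset_iff.2 hsS, ?_⟩
    have h := closure_pair_finite (hsq s hsS) (hsq s hsS) hss0
    rwa [Set.pair_eq_singleton] at h
  obtain ⟨T, hTmax, hsT⟩ := exists_maxSpherical hfin hssph
  have hsT' : s ∈ T := hsT rfl
  obtain ⟨a, ha, b, hb, hab, hodd, hTeq⟩ :=
    maxSpherical_odd_pair h0 h1 hTmax (hnotin T hTmax hsT')
  have haS := hTmax.1.1 ha
  have hbS := hTmax.1.1 hb
  have hstep : ∃ t ∈ S, t ≠ s ∧ Odd (orderOf (s * t)) := by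
    have hsmem : s ∈ ({a, b} : Set W) := hTeq ▸ hsT'
    simp only [Set.mem_insert_iff, Set.mem_singleton_iff] at hsmem
    rcases hsmem with rfl | rfl
    · exact ⟨b, hbS, fun h => hab h.symm, hodd⟩
    · exact ⟨a, haS, fun h => hab h, (orderOf_mul_comm' a s) ▸ hodd⟩
  obtain ⟨t, htS, hts, hodd'⟩ := hstep
  have huniq : ∀ t' ∈ S, t' ≠ s → Odd (orderOf (s * t')) → t' = t := by
    intro t' ht'S ht's hodd''
    by_contra hne
    exact h2 ⟨t, htS, s, hsS, t', ht'S, hts, fun h => ht's h.symm, fun h => hne h.symm,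
      (orderOf_mul_comm' s t) ▸ hodd', hodd''⟩
  refine ⟨t, htS, hts, hodd', huniq, ?_⟩
  intro u huS hu
  by_contra hne0
  have hus : u ≠ s := fun h => hu (by simp [h])
  rcases Nat.even_or_odd (orderOf (s * u)) with he | ho
  · have hsph : IsSpherical S {s, u} :=
      ⟨Set.insert_subset_iff.mpr ⟨hsS, Set.singleton_subset_iff.2 huS⟩,
        closure_pair_finite (hsq s hsS) (hsq u huS) hne0⟩
    obtain ⟨T', hT'max, hsub⟩ := exists_maxSpherical hfin hsph
    have hsT2 : s ∈ T' := hsub (Set.mem_insert _ _)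
    have huT2 : u ∈ T' := hsub (by simp)
    refine hnotin T' hT'max hsT2 ?_
    by_contra hnse
    obtain ⟨a', ha', b', hb', hab', hodd2, hTeq'⟩ := maxSpherical_odd_pair h0 h1 hT'max hnse
    have hsm : s ∈ ({a', b'} : Set W) := hTeq' ▸ hsT2
    have hum : u ∈ ({a', b'} : Set W) := hTeq' ▸ huT2
    simp only [Set.mem_insert_iff, Set.mem_singleton_iff] at hsm hum
    have heven : Even (orderOf (a' * b')) := by
      rcases hsm with rfl | rfl <;> rcases hum with rfl | rfl
      · exact absurd rfl hus
      · exact he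
      · exact (orderOf_mul_comm' u s) ▸ he
      · exact absurd rfl hus
    exact (Nat.not_even_iff_odd.mpr hodd2) heven
  · exact hu (by simp [huniq u huS hus ho])
end

section
/- Let W be a finite dihedral Coxeter group of order 2m with m odd, with Coxeter system (W,{s,t}), m(s,t) = m. Then W is rigid: any Coxeter generating set S' of W has two elements s',t' with m(s',t') = m. -/
open Subgroup

lemma refl_involutive (u τ : ℂ) (hu : u * (starRingEnd ℂ) u = 1)
    (hτ : u * (starRingEnd ℂ) τ = -τ) :
    Function.Involutive (fun z : ℂ => u * (starRingEnd ℂ) z + τ) := by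
  intro z
  dsimp only
  rw [map_add, map_mul, Complex.conj_conj]
  linear_combination z * hu + hτ

lemma perm_pow_apply (g : Equiv.Perm ℂ) (A b : ℂ) (hg : ∀ z, g z = A * z + b) (n : ℕ) :
    ∀ z, (g ^ n) z = A ^ n * z + (∑ i ∈ Finset.range n, A ^ i) * b := by
  induction n with
  | zero => intro z; simp
  | succ n ih =>
    intro z
    rw [pow_succ, Equiv.Perm.mul_apply, hg, ih, Finset.sum_range_succ, pow_succ]
    ring

lemma perm_pow_eq_one (g : Equiv.Perm ℂ) (A b : ℂ) (hg : ∀ z, g z = A * z + b)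
    (n : ℕ) (hA1 : A ≠ 1) (hAn : A ^ n = 1) : g ^ n = 1 := by
  ext z
  rw [perm_pow_apply g A b hg n z, hAn, geom_sum_eq hA1 n, hAn]
  simp


/-- A finite dihedral Coxeter group of order `2m`, `m` odd, is rigid. -/
theorem dihedral_odd_rigid {W : Type} [Group W] (s t : W) (m : ℕ) (hm : Odd m)
    (hst : s ≠ t) (hS : IsCoxGenSet ({s, t} : Set W)) (ho : orderOf (s * t) = m)
    (hcard : Nat.card W = 2 * m) :
    ∀ S' : Set W, IsCoxGenSet S' →
      ∃ s' t' : W, s' ≠ t' ∧ S' = {s', t'} ∧ orderOf (s' * t') = m := by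
  classical
  obtain ⟨-, M0, cs0, hs0⟩ := hS
  have hsmem : s ∈ ({s, t} : Set W) := Set.mem_insert _ _
  have htmem : t ∈ ({s, t} : Set W) := Set.mem_insert_of_mem _ rfl
  have hss : s * s = 1 := by
    have := cs0.simple_mul_simple_self ⟨s, hsmem⟩; rwa [hs0] at this
  have htt : t * t = 1 := by
    have := cs0.simple_mul_simple_self ⟨t, htmem⟩; rwa [hs0] at this
  have hm0 : m ≠ 0 := by rcases hm with ⟨k, hk⟩; omega
  haveI hfin : Finite W := Nat.finite_of_card_ne_zero (by omega)
  have hm1 : m ≠ 1 := by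
    intro h
    have h2 : s * t = 1 := orderOf_eq_one_iff.mp (by rw [ho, h])
    have h4 : t⁻¹ = t := inv_eq_of_mul_eq_one_right htt
    exact hst ((eq_inv_of_mul_eq_one_left h2).trans h4)
  have hm3 : 3 ≤ m := by rcases hm with ⟨k, hk⟩; omega
  set R : Subgroup W := Subgroup.zpowers (s * t) with hR
  have hcardR : Nat.card R = m := by rw [hR, Nat.card_zpowers, ho]
  have hRindex : R.index = 2 := by
    have h1 := R.card_mul_index
    rw [hcardR, hcard] at h1
    exact Nat.eq_of_mul_eq_mul_left (by omega) (h1.trans (mul_comm 2 m))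
  have hnotR : ∀ x : W, x ≠ 1 → x * x = 1 → x ∉ R := by
    intro x hx1 hxx hxR
    haveI : Fact (Nat.Prime 2) := ⟨by norm_num⟩
    have h2 : orderOf x = 2 := orderOf_eq_prime (by rwa [pow_two]) hx1
    have hdvd := R.orderOf_dvd_natCard hxR
    rw [h2, hcardR] at hdvd
    rcases hm with ⟨k, hk⟩; rcases hdvd with ⟨c, hc⟩; omega
  have hmulR : ∀ x y : W, x ∉ R → y ∉ R → x * y ∈ R := fun x y hx hy =>
    (R.mul_mem_iff_of_index_two hRindex).mpr (iff_of_false hx hy)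
  have hs1 : s ≠ 1 := by
    intro h
    rw [h, one_mul] at ho
    have : orderOf t ∣ 2 := orderOf_dvd_of_pow_eq_one (by rwa [pow_two])
    rw [ho] at this
    have := Nat.le_of_dvd (by norm_num) this
    omega
  have hsR : s ∉ R := hnotR s hs1 hss
  intro S' hS'
  obtain ⟨hS'fin, M', cs', hsimp'⟩ := hS'
  have hclosure : Subgroup.closure S' = ⊤ := by
    have h1 := cs'.subgroup_closure_range_simple
    have hrange : Set.range cs'.simple = S' := by
      ext x
      constructor
      · rintro ⟨i, rfl⟩; rw [hsimp' i]; exact i.2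
      · intro hx; exact ⟨⟨x, hx⟩, hsimp' _⟩
    rwa [hrange] at h1
  have hsq' : ∀ x ∈ S', x * x = 1 := by
    intro x hx
    have := cs'.simple_mul_simple_self ⟨x, hx⟩; rwa [hsimp'] at this
  have hinv' : ∀ x ∈ S', x⁻¹ = x := fun x hx => inv_eq_of_mul_eq_one_right (hsq' x hx)
  have hne1 : ∀ x ∈ S', x ≠ 1 := by
    intro x hx h1
    have hl := cs'.length_simple ⟨x, hx⟩
    rw [hsimp'] at hl
    have hl2 : cs'.length x = 1 := hl
    rw [h1, cs'.length_one] at hl2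
    exact absurd hl2 (by norm_num)
  have hSnotR : ∀ x ∈ S', x ∉ R := fun x hx => hnotR x (hne1 x hx) (hsq' x hx)
  have hxs : ∀ i : ↥S', ∃ k : ℤ, (s * t) ^ k = (i : W) * s := by
    intro i
    have := hmulR _ s (hSnotR i i.2) hsR
    exact Subgroup.mem_zpowers_iff.mp this
  choose a ha using hxs
  have hprod : ∀ i j : ↥S', (i : W) * (j : W) = (s * t) ^ (a i - a j) := by
    intro i j
    rw [zpow_sub, ha i, ha j]
    have h2 : ((j : W) * s)⁻¹ = s⁻¹ * (j : W)⁻¹ := mul_inv_rev _ _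
    rw [h2, hinv' _ j.2]
    group
  have hstpow : ∀ c : ℤ, (s * t) ^ c = 1 ↔ (m : ℤ) ∣ c := by
    intro c
    rw [← orderOf_dvd_iff_zpow_eq_one, ho]
  have hinj : ∀ i j : ↥S', i ≠ j → ¬ ((m : ℤ) ∣ (a i - a j)) := by
    intro i j hij hdvd
    have h1 : ((i : W) * (j : W)) = 1 := by rw [hprod i j, (hstpow _).mpr hdvd]
    have h2 : (i : W) = (j : W) := by
      rw [← hinv' _ j.2]
      exact eq_inv_of_mul_eq_one_left h1
    exact hij (Subtype.ext h2)
  by_cases h3 : ∃ u ∈ S', ∃ v ∈ S', ∃ w ∈ S', u ≠ v ∧ u ≠ w ∧ v ≠ w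
  · exfalso
    obtain ⟨u, hu, v, hv, w, hw, huv, huw, hvw⟩ := h3
    set i1 : ↥S' := ⟨u, hu⟩ with hi1
    set i2 : ↥S' := ⟨v, hv⟩ with hi2
    set i3 : ↥S' := ⟨w, hw⟩ with hi3
    have h12 : i1 ≠ i2 := fun h => huv (congrArg Subtype.val h)
    have h13 : i1 ≠ i3 := fun h => huw (congrArg Subtype.val h)
    have h23 : i2 ≠ i3 := fun h => hvw (congrArg Subtype.val h)
    set ζ : ℂ := Complex.exp (2 * (Real.pi : ℂ) * Complex.I / (m : ℂ)) with hζ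
    have hζprim : IsPrimitiveRoot ζ m := by rw [hζ]; exact Complex.isPrimitiveRoot_exp m hm0
    have hζ0 : ζ ≠ 0 := Complex.exp_ne_zero _
    have hζconj : (starRingEnd ℂ) ζ = ζ⁻¹ := by
      rw [hζ, ← Complex.exp_conj, ← Complex.exp_neg]
      congr 1
      simp [map_div₀, Complex.conj_I, map_ofNat]
      ring
    have hζconjz : ∀ c : ℤ, (starRingEnd ℂ) (ζ ^ c) = ζ ^ (-c) := by
      intro c
      rw [map_zpow₀, hζconj, inv_zpow, ← zpow_neg]
    have hζone : ∀ c : ℤ, ζ ^ c = 1 ↔ (m : ℤ) ∣ c := fun c => hζprim.zpow_eq_one_iff_dvd c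
    set w0 : ℂ := Complex.exp ((Real.pi : ℂ) * Complex.I * ((a i3 : ℤ) : ℂ) / (m : ℂ)) with hw0
    have hw00 : w0 ≠ 0 := Complex.exp_ne_zero _
    have hw0conj : (starRingEnd ℂ) w0 = w0⁻¹ := by
      rw [hw0, ← Complex.exp_conj, ← Complex.exp_neg]
      congr 1
      simp [map_div₀, Complex.conj_I, map_ofNat]
      ring
    have hζa3 : ζ ^ (a i3) = w0 * w0 := by
      rw [hζ, hw0, ← Complex.exp_int_mul, ← Complex.exp_add]
      congr 1
      ring
    set τ : ↥S' → ℂ := fun i => if i = i3 then Complex.I * w0 else 0 with hτ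
    have hτ3 : τ i3 = Complex.I * w0 := by rw [hτ]; simp
    have hτ1 : τ i1 = 0 := by rw [hτ]; simp [h13]
    have hτ2 : τ i2 = 0 := by rw [hτ]; simp [h23]
    have hinvol : ∀ i : ↥S', Function.Involutive
        (fun z : ℂ => ζ ^ (a i) * (starRingEnd ℂ) z + τ i) := by
      intro i
      apply refl_involutive
      · rw [hζconjz, ← zpow_add₀ hζ0]
        simp
      · by_cases hi : i = i3
        · subst hi
          rw [hτ3, hζa3, map_mul, Complex.conj_I, hw0conj]
          field_simp
        · have : τ i = 0 := by rw [hτ]; simp [hi]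
          rw [this]
          simp
    set T : ↥S' → Equiv.Perm ℂ := fun i => Function.Involutive.toPerm _ (hinvol i) with hTdef
    have hT : ∀ (i : ↥S') (z : ℂ), T i z = ζ ^ (a i) * (starRingEnd ℂ) z + τ i :=
      fun i z => rfl
    have hcomp : ∀ (i j : ↥S') (z : ℂ),
        (T i * T j) z = ζ ^ (a i - a j) * z + (ζ ^ (a i) * (starRingEnd ℂ) (τ j) + τ i) := by
      intro i j z
      rw [Equiv.Perm.mul_apply, hT, hT, map_add, map_mul, Complex.conj_conj, hζconjz]
      have hsplit : ζ ^ (a i - a j) = ζ ^ (a i) * ζ ^ (-a j) := by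
        rw [sub_eq_add_neg, zpow_add₀ hζ0]
      rw [hsplit]
      ring
    have hApow : ∀ (i j : ↥S') (n : ℕ),
        ((s * t) ^ (a i - a j)) ^ n = 1 → (ζ ^ (a i - a j)) ^ n = 1 := by
      intro i j n h
      rw [← zpow_natCast ((s * t) ^ (a i - a j)) n, ← zpow_mul] at h
      have hdvd := (hstpow _).mp h
      rw [← zpow_natCast (ζ ^ (a i - a j)) n, ← zpow_mul]
      exact (hζone _).mpr hdvd
    have hlift : M'.IsLiftable T := by
      intro i j
      by_cases hij : i = j
      · subst hij
        rw [M'.diagonal i, pow_one]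
        ext z
        simp only [Equiv.Perm.mul_apply, Equiv.Perm.one_apply]
        exact hinvol i z
      · have hW := cs'.simple_mul_simple_pow i j
        rw [hsimp', hsimp', hprod i j] at hW
        have hA1 : ζ ^ (a i - a j) ≠ 1 := fun h => hinj i j hij ((hζone _).mp h)
        exact perm_pow_eq_one (T i * T j) _ _ (hcomp i j) _ hA1 (hApow i j _ hW)
    set φ : W →* Equiv.Perm ℂ := cs'.lift ⟨T, hlift⟩ with hφdef
    have hφ : ∀ (x : W) (hx : x ∈ S'), φ x = T ⟨x, hx⟩ := by
      intro x hx
      have h8 := cs'.lift_apply_simple hlift ⟨x, hx⟩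
      rw [hsimp'] at h8
      exact h8
    have hcommW : (u * v) * (v * w) = (v * w) * (u * v) := by
      have e1 : u * v = (s * t) ^ (a i1 - a i2) := hprod i1 i2
      have e2 : v * w = (s * t) ^ (a i2 - a i3) := hprod i2 i3
      rw [e1, e2, ← zpow_add, ← zpow_add, add_comm]
    have hcommT : (T i1 * T i2) * (T i2 * T i3) = (T i2 * T i3) * (T i1 * T i2) := by
      have h9 := congrArg φ hcommW
      simp only [map_mul, hφ u hu, hφ v hv, hφ w hw] at h9
      exact h9
    have hEval : ((T i1 * T i2) * (T i2 * T i3)) 0 = ((T i2 * T i3) * (T i1 * T i2)) 0 := by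
      rw [hcommT]
    have lhs : ((T i1 * T i2) * (T i2 * T i3)) 0
        = ζ ^ (a i1 - a i2) * (ζ ^ (a i2) * (starRingEnd ℂ) (τ i3)) := by
      rw [Equiv.Perm.mul_apply, hcomp i2 i3, hcomp i1 i2, hτ1, hτ2]
      simp only [mul_zero, zero_add, add_zero, map_zero]
    have rhs : ((T i2 * T i3) * (T i1 * T i2)) 0 = ζ ^ (a i2) * (starRingEnd ℂ) (τ i3) := by
      rw [Equiv.Perm.mul_apply, hcomp i1 i2, hcomp i2 i3, hτ1, hτ2]
      simp only [mul_zero, zero_add, add_zero, map_zero]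
    rw [lhs, rhs] at hEval
    have hX : ζ ^ (a i2) * (starRingEnd ℂ) (τ i3) ≠ 0 := by
      rw [hτ3]
      apply mul_ne_zero (zpow_ne_zero _ hζ0)
      intro h0
      rw [starRingEnd_apply, star_eq_zero] at h0
      exact (mul_ne_zero Complex.I_ne_zero hw00) h0
    have hζ12 : ζ ^ (a i1 - a i2) = 1 := by
      have h10 : ζ ^ (a i1 - a i2) * (ζ ^ (a i2) * (starRingEnd ℂ) (τ i3))
          = 1 * (ζ ^ (a i2) * (starRingEnd ℂ) (τ i3)) := by rw [hEval, one_mul]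
      exact mul_right_cancel₀ hX h10
    exact hinj i1 i2 h12 ((hζone _).mp hζ12)
  · push_neg at h3
    -- S' is nonempty
    have hSne : S'.Nonempty := by
      rcases Set.eq_empty_or_nonempty S' with h | h
      · exfalso
        rw [h, Subgroup.closure_empty] at hclosure
        have hs' : s ∈ (⊥ : Subgroup W) := hclosure ▸ Subgroup.mem_top s
        have ht' : t ∈ (⊥ : Subgroup W) := hclosure ▸ Subgroup.mem_top t
        rw [Subgroup.mem_bot] at hs' ht'
        exact hst (hs'.trans ht'.symm)
      · exact h
    obtain ⟨s'0, hs'0⟩ := hSne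
    by_cases hallsame : ∀ x ∈ S', x = s'0
    · exfalso
      have hSeq : S' = {s'0} := Set.eq_singleton_iff_unique_mem.mpr ⟨hs'0, hallsame⟩
      rw [hSeq, ← Subgroup.zpowers_eq_closure] at hclosure
      have h1 : orderOf s'0 = 2 * m := by
        rw [← Nat.card_zpowers, hclosure, Subgroup.card_top, hcard]
      have h2 : orderOf s'0 ∣ 2 := orderOf_dvd_of_pow_eq_one (by rw [pow_two]; exact hsq' s'0 hs'0)
      rw [h1] at h2
      have := Nat.le_of_dvd (by norm_num) h2
      omega
    · push_neg at hallsame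
      obtain ⟨t'0, ht'0, ht'0ne⟩ := hallsame
      have hne : s'0 ≠ t'0 := fun h => ht'0ne h.symm
      have hSeq : S' = {s'0, t'0} := by
        ext x
        constructor
        · intro hx
          by_cases h1 : x = s'0
          · exact Or.inl h1
          by_cases h2 : x = t'0
          · exact Or.inr h2
          · exact absurd (h3 x hx s'0 hs'0 t'0 ht'0 h1 h2) hne
        · rintro (rfl | rfl) <;> assumption
      refine ⟨s'0, t'0, hne, hSeq, ?_⟩
      -- now the order computation
      set d := orderOf (s'0 * t'0) with hd
      have hdm : d ∣ m := by
        have := R.orderOf_dvd_natCard (hmulR s'0 t'0 (hSnotR s'0 hs'0) (hSnotR t'0 ht'0))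
        rwa [hcardR] at this
      have hs'inv : s'0⁻¹ = s'0 := hinv' s'0 hs'0
      have ht'inv : t'0⁻¹ = t'0 := hinv' t'0 ht'0
      have base : s'0 * (s'0 * t'0) * s'0⁻¹ = (s'0 * t'0)⁻¹ := by
        rw [mul_inv_rev, hs'inv, ht'inv, ← mul_assoc, hsq' s'0 hs'0, one_mul]
      have hconj : ∀ k : ℤ, s'0 * (s'0 * t'0) ^ k = (s'0 * t'0) ^ (-k) * s'0 := by
        intro k
        have h1 : s'0 * (s'0 * t'0) ^ k * s'0⁻¹ = (s'0 * t'0) ^ (-k) := by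
          have h2 := map_zpow (MulAut.conj s'0) (s'0 * t'0) k
          simp only [MulAut.conj_apply] at h2
          rw [h2, base, inv_zpow, ← zpow_neg]
        calc s'0 * (s'0 * t'0) ^ k = (s'0 * (s'0 * t'0) ^ k * s'0⁻¹) * s'0 := by group
        _ = (s'0 * t'0) ^ (-k) * s'0 := by rw [h1]
      set P : Subgroup W := Subgroup.zpowers (s'0 * t'0) with hP
      set Cset : Set W := (P : Set W) ∪ (fun p => p * s'0) '' (P : Set W) with hCset
      have hswap : ∀ p ∈ P, ∃ q ∈ P, s'0 * p = q * s'0 := by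
        intro p hp
        obtain ⟨k, hk⟩ := Subgroup.mem_zpowers_iff.mp hp
        exact ⟨(s'0 * t'0) ^ (-k), zpow_mem (Subgroup.mem_zpowers _) _, by rw [← hk, hconj]⟩
      have hCmemP : ∀ p ∈ P, p ∈ Cset := fun p hp => Or.inl hp
      have hCmemPs : ∀ p ∈ P, p * s'0 ∈ Cset := fun p hp => Or.inr ⟨p, hp, rfl⟩
      have hgen1 : s'0 ∈ Cset := by
        have := hCmemPs 1 P.one_mem; rwa [one_mul] at this
      have hgen2 : t'0 ∈ Cset := by
        have h5 : (s'0 * t'0)⁻¹ * s'0 = t'0 := by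
          rw [mul_inv_rev, hs'inv, ht'inv, mul_assoc, hsq' s'0 hs'0, mul_one]
        have := hCmemPs _ (P.inv_mem (Subgroup.mem_zpowers _)); rwa [h5] at this
      have hmem : ∀ x ∈ Subgroup.closure ({s'0, t'0} : Set W), x ∈ Cset := by
        intro x hx
        refine Subgroup.closure_induction ?_ ?_ ?_ ?_ hx
        · intro y hy
          simp only [Set.mem_insert_iff, Set.mem_singleton_iff] at hy
          rcases hy with rfl | rfl
          exacts [hgen1, hgen2]
        · exact hCmemP 1 P.one_mem
        · rintro x y - - hxC hyC
          rcases hxC with hx' | ⟨p, hp, rfl⟩ <;> rcases hyC with hy' | ⟨q, hq, rfl⟩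
          · exact hCmemP _ (P.mul_mem hx' hy')
          · dsimp only
            rw [← mul_assoc]
            exact hCmemPs _ (P.mul_mem hx' hq)
          · obtain ⟨q, hq, hq'⟩ := hswap y hy'
            dsimp only
            rw [mul_assoc, hq', ← mul_assoc]
            exact hCmemPs _ (P.mul_mem hp hq)
          · obtain ⟨q', hq', hq''⟩ := hswap q hq
            dsimp only
            have heq : p * s'0 * (q * s'0) = p * q' := by
              have h6 : s'0 * (q * s'0) = q' * (s'0 * s'0) := by rw [← mul_assoc, hq'', mul_assoc]
              rw [mul_assoc, h6, hsq' s'0 hs'0, mul_one]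
            rw [heq]
            exact hCmemP _ (P.mul_mem hp hq')
        · rintro x - hxC
          rcases hxC with hx' | ⟨p, hp, rfl⟩
          · exact hCmemP _ (P.inv_mem hx')
          · obtain ⟨q, hq, hq'⟩ := hswap p⁻¹ (P.inv_mem hp)
            dsimp only
            rw [mul_inv_rev, hs'inv, hq']
            exact hCmemPs _ hq
      have hclosure2 : Subgroup.closure ({s'0, t'0} : Set W) = ⊤ := by
        rw [← hSeq]; exact hclosure
      have hsubuniv : (Set.univ : Set W) ⊆ Cset := fun x _ =>
        hmem x (by rw [hclosure2]; exact Subgroup.mem_top x)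
      have hcardP : ((P : Set W)).ncard = d := by
        rw [← Nat.card_coe_set_eq]
        exact Nat.card_zpowers _
      have h1 : 2 * m ≤ Cset.ncard := by
        rw [← hcard, ← Set.ncard_univ]
        exact Set.ncard_le_ncard hsubuniv (Set.toFinite _)
      have h2 : Cset.ncard ≤ d + d := by
        refine le_trans (Set.ncard_union_le _ _) ?_
        have h4 : ((fun p => p * s'0) '' (P : Set W)).ncard ≤ d := by
          refine le_trans (Set.ncard_image_le (Set.toFinite _)) hcardP.le
        omega
      have hdpos : 0 < d := orderOf_pos _
      exact Nat.le_antisymm (Nat.le_of_dvd (by omega) hdm) (by omega)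
end
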